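/- arXiv:0904.0041 — 3 statements merged into one kernel-verified Lean document; each statement's English description precedes it below -/
import Mathlib

section
/- Let V be a finite-dimensional real vector space and let Δ ⊆ V ∖ {0} satisfy Δ = −Δ. Let P ⊆ Δ be a strongly parabolic subset. Then P ∖ (−P) is an ideal of P: if α ∈ P ∖ (−P) and β ∈ P with α + β ∈ Δ, then α + β ∈ P ∖ (−P). -/
/-- A subset `P` of `Δ` is *strongly parabolic* if `P = Δ`, or
`P = P⁰ ⊔ Δ⁺` for some triangular decomposition of `Δ` given by a linear
functional `l` (with `Δ⁰ = Δ ∩ ker l`, `Δ⁺ = {α ∈ Δ | l α > 0}`) and some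
strongly parabolic subset `P⁰` of `Δ⁰`. -/
inductive IsStronglyParabolicIn {V : Type*} [AddCommGroup V] [Module ℝ V] :
    Set V → Set V → Prop
  | all (Δ : Set V) : IsStronglyParabolicIn Δ Δ
  | step (Δ : Set V) (l : V →ₗ[ℝ] ℝ) (P₀ : Set V)
      (h : IsStronglyParabolicIn {α ∈ Δ | l α = 0} P₀) :
      IsStronglyParabolicIn Δ (P₀ ∪ {α ∈ Δ | 0 < l α})

/-!
Induct on the definition of strong parabolicity. If `P = P₀ ∪ Δ⁺` for a functional `l`, then
`P ∖ (−P) = (P₀ ∖ (−P₀)) ∪ Δ⁺` and `l ≥ 0` on `P`, so `l (α + β) > 0` unless `α, β ∈ P₀`; in that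
case the induction hypothesis applies, since `Δ ∩ ker l` is again symmetric.
-/

section

variable {V : Type*} [AddCommGroup V] [Module ℝ V]

lemma IsStronglyParabolicIn.subset {Δ P : Set V} (h : IsStronglyParabolicIn Δ P) : P ⊆ Δ := by
  induction h with
  | all Δ => exact subset_rfl
  | step Δ l P₀ _ ih => exact Set.union_subset (fun x hx => (ih hx).1) (Set.sep_subset _ _)

lemma sep_ker_eq_neg {Δ : Set V} (hsym : Δ = -Δ) (l : V →ₗ[ℝ] ℝ) :
    {α ∈ Δ | l α = 0} = -{α ∈ Δ | l α = 0} := by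
  ext x
  simp only [Set.mem_neg, Set.mem_ofPred_eq, map_neg, neg_eq_zero]
  rw [← Set.mem_neg, ← hsym]

lemma mem_union_pos_diff_neg_iff {Δ P₀ : Set V} {l : V →ₗ[ℝ] ℝ} (hP₀ : ∀ γ ∈ P₀, l γ = 0)
    {α : V} :
    α ∈ (P₀ ∪ {γ ∈ Δ | 0 < l γ}) \ -(P₀ ∪ {γ ∈ Δ | 0 < l γ}) ↔
      α ∈ P₀ \ -P₀ ∨ α ∈ {γ ∈ Δ | 0 < l γ} := by
  constructor
  · rintro ⟨hα | hα, hnα⟩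
    · exact Or.inl ⟨hα, fun h => hnα (Or.inl h)⟩
    · exact Or.inr hα
  · rintro (⟨hα, hnα⟩ | hα)
    · refine ⟨Or.inl hα, ?_⟩
      rintro (h | ⟨-, h⟩)
      · exact hnα h
      · simp [hP₀ α hα] at h
    · refine ⟨Or.inr hα, ?_⟩
      rintro (h | ⟨-, h⟩)
      · have := hP₀ _ h
        simp only [map_neg, neg_eq_zero] at this
        exact hα.2.ne' this
      · simp only [map_neg, Left.neg_pos_iff] at h
        exact (hα.2.trans h).false

theorem IsStronglyParabolicIn.add_mem_diff_neg {Δ P : Set V} (hP : IsStronglyParabolicIn Δ P)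
    (hsym : Δ = -Δ) {α β : V} (hα : α ∈ P \ -P) (hβ : β ∈ P) (hαβ : α + β ∈ Δ) :
    α + β ∈ P \ -P := by
  induction hP generalizing α β with
  | all Δ => exact absurd (hsym ▸ hα.1) hα.2
  | step Δ l P₀ hP₀ ih =>
    have hker : ∀ γ ∈ P₀, l γ = 0 := fun γ hγ => (hP₀.subset hγ).2
    rw [mem_union_pos_diff_neg_iff hker] at hα ⊢
    rcases hα with hα | hα
    · rcases hβ with hβ | hβ
      · left
        exact ih (sep_ker_eq_neg hsym l) hα hβ ⟨hαβ, by simp [hker _ hα.1, hker _ hβ]⟩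
      · right
        exact ⟨hαβ, by rw [map_add, hker _ hα.1, zero_add]; exact hβ.2⟩
    · have hβ_nonneg : 0 ≤ l β := by
        rcases hβ with hβ | hβ
        · exact (hker _ hβ).ge
        · exact hβ.2.le
      right
      exact ⟨hαβ, by rw [map_add]; linarith [hα.2]⟩

end

theorem strongly_parabolic_ideal_general
    {V : Type*} [AddCommGroup V] [Module ℝ V]
    (Δ P : Set V) (hsym : Δ = -Δ)
    (hP : IsStronglyParabolicIn Δ P) :
    ∀ α ∈ P \ (-P), ∀ β ∈ P, α + β ∈ Δ → α + β ∈ P \ (-P) :=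
  fun _ hα _ hβ hαβ => hP.add_mem_diff_neg hsym hα hβ hαβ

/-- If `Δ = −Δ`, `Δ ⊆ V ∖ {0}` and `P` is a strongly parabolic subset of `Δ`,
then `P ∖ (−P)` is an ideal of `P`: if `α ∈ P ∖ (−P)` and `β ∈ P` with
`α + β ∈ Δ`, then `α + β ∈ P ∖ (−P)`. -/
theorem strongly_parabolic_ideal
    {V : Type*} [AddCommGroup V] [Module ℝ V] [FiniteDimensional ℝ V]
    (Δ P : Set V) (h0 : (0 : V) ∉ Δ) (hsym : Δ = -Δ)
    (hP : IsStronglyParabolicIn Δ P) :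
    ∀ α ∈ P \ (-P), ∀ β ∈ P, α + β ∈ Δ → α + β ∈ P \ (-P) :=
  strongly_parabolic_ideal_general Δ P hsym hP
end

section
/- Let R be an irreducible finite reduced crystallographic root system spanning W, let n ≥ 1, V = W × ℝⁿ, and Δ = {(α, γ) : α ∈ R, γ ∈ ℤⁿ} ∪ {(0, γ) : γ ∈ ℤⁿ ∖ {0}}. If P is a parabolic subset of Δ, then S = {α ∈ R : (α, γ) ∈ P for some γ ∈ ℤⁿ} is a parabolic subset of R. -/
/-- A subset `P` of `Δ` is *parabolic* if `P ∪ (−P) = Δ` and `P` is closed. -/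
def IsParabolicIn {V : Type*} [AddCommGroup V] (Δ P : Set V) : Prop :=
  P ∪ (-P) = Δ ∧ ∀ α ∈ P, ∀ β ∈ P, α + β ∈ Δ → α + β ∈ P

/-- `P` is *principal parabolic* in `Δ` if `P = {α ∈ Δ | λ α ≥ 0}`. -/
def IsPrincipalParabolicIn {V : Type*} [AddCommGroup V] [Module ℝ V] (Δ P : Set V) : Prop :=
  ∃ l : V →ₗ[ℝ] ℝ, P = {α ∈ Δ | 0 ≤ l α}

/-- A finite reduced crystallographic root system in a real inner product space. -/
structure IsRootSystem {W : Type*} [NormedAddCommGroup W] [InnerProductSpace ℝ W]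
    (R : Set W) : Prop where
  finite : R.Finite
  nonzero : (0 : W) ∉ R
  reflection_mem : ∀ α ∈ R, ∀ β ∈ R,
    β - (2 * (inner ℝ β α : ℝ) / (inner ℝ α α : ℝ)) • α ∈ R
  crystallographic : ∀ α ∈ R, ∀ β ∈ R,
    ∃ n : ℤ, (n : ℝ) * (inner ℝ β β : ℝ) = 2 * (inner ℝ α β : ℝ)
  reduced : ∀ α ∈ R, ∀ t : ℝ, t • α ∈ R → t = 1 ∨ t = -1

/-- A root system is irreducible if it is not the union of two nonempty mutually
orthogonal subsystems. -/
def IsIrreducibleRootSystem {W : Type*} [NormedAddCommGroup W] [InnerProductSpace ℝ W]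
    (R : Set W) : Prop :=
  ¬ ∃ R₁ R₂ : Set W, R₁.Nonempty ∧ R₂.Nonempty ∧ R = R₁ ∪ R₂ ∧
      ∀ α ∈ R₁, ∀ β ∈ R₂, (inner ℝ α β : ℝ) = 0

/-- `γ ∈ ℝⁿ` is an integer vector, i.e. lies in `ℤⁿ`. -/
def IsIntVec {n : ℕ} (γ : Fin n → ℝ) : Prop := ∀ i, ∃ k : ℤ, γ i = (k : ℝ)

/-- The toroidal root system `Δ = (R + Γ) ∪ (Γ ∖ {0})`, `Γ = ℤⁿ`, realized in
`V = W × ℝⁿ`. -/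
def ToroidalDelta {W : Type*} [NormedAddCommGroup W] [InnerProductSpace ℝ W]
    (R : Set W) (n : ℕ) : Set (W × (Fin n → ℝ)) :=
  {v | (v.1 ∈ R ∧ IsIntVec v.2) ∨ (v.1 = 0 ∧ IsIntVec v.2 ∧ v.2 ≠ 0)}

/-!
The projection `S` inherits both axioms directly from `P`. Closedness: if `(α, γ), (β, δ) ∈ P`
and `α + β ∈ R`, then `(α + β, γ + δ) ∈ Δ`, hence it lies in `P`. Covering: for `α ∈ R` the
element `(α, 0)` of `Δ` lies in `P` or in `-P`, so `α ∈ S` or `-α ∈ S`; conversely `S ∪ -S ⊆ R`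
because `R = -R`, the reflection of a root in itself being its negative.
-/

theorem IsIntVec.zero {n : ℕ} : IsIntVec (0 : Fin n → ℝ) :=
  fun _ => ⟨0, by simp⟩

theorem IsIntVec.add {n : ℕ} {γ δ : Fin n → ℝ} (hγ : IsIntVec γ) (hδ : IsIntVec δ) :
    IsIntVec (γ + δ) := by
  intro i
  obtain ⟨k, hk⟩ := hγ i
  obtain ⟨m, hm⟩ := hδ i
  exact ⟨k + m, by simp [hk, hm]⟩

section

variable {W : Type*} [NormedAddCommGroup W] [InnerProductSpace ℝ W]

theorem IsRootSystem.neg_mem {R : Set W} (hR : IsRootSystem R) {α : W} (hα : α ∈ R) :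
    -α ∈ R := by
  have hαα : (inner ℝ α α : ℝ) ≠ 0 :=
    inner_self_ne_zero.mpr fun h => hR.nonzero (h ▸ hα)
  have hrefl : α - (2 * (inner ℝ α α : ℝ) / (inner ℝ α α : ℝ)) • α = -α := by
    rw [mul_div_cancel_right₀ 2 hαα, two_smul, sub_add_cancel_left]
  exact hrefl ▸ hR.reflection_mem α hα α hα

def toroidalProjection (R : Set W) {n : ℕ} (P : Set (W × (Fin n → ℝ))) : Set W :=
  {α | α ∈ R ∧ ∃ γ : Fin n → ℝ, IsIntVec γ ∧ (α, γ) ∈ P}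

variable {R : Set W} {n : ℕ} {P : Set (W × (Fin n → ℝ))}

theorem toroidalProjection_union_neg (hneg : ∀ α ∈ R, -α ∈ R)
    (hP : P ∪ -P = ToroidalDelta R n) :
    toroidalProjection R P ∪ -toroidalProjection R P = R := by
  ext α
  constructor
  · rintro (⟨hα, -⟩ | ⟨hα, -⟩)
    · exact hα
    · simpa using hneg _ hα
  · intro hα
    have hΔ : (α, (0 : Fin n → ℝ)) ∈ P ∪ -P := hP ▸ Or.inl ⟨hα, IsIntVec.zero⟩
    rcases hΔ with hpos | hnegP
    · exact Or.inl ⟨hα, 0, IsIntVec.zero, hpos⟩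
    · exact Or.inr ⟨hneg _ hα, 0, IsIntVec.zero, by simpa using hnegP⟩

theorem toroidalProjection_add_mem
    (hP : ∀ v ∈ P, ∀ w ∈ P, v + w ∈ ToroidalDelta R n → v + w ∈ P) :
    ∀ α ∈ toroidalProjection R P, ∀ β ∈ toroidalProjection R P,
      α + β ∈ R → α + β ∈ toroidalProjection R P := by
  rintro α ⟨-, γ, hγ, hαγ⟩ β ⟨-, δ, hδ, hβδ⟩ hαβ
  have hγδ := hγ.add hδ
  exact ⟨hαβ, γ + δ, hγδ, hP _ hαγ _ hβδ (Or.inl ⟨hαβ, hγδ⟩)⟩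

end

theorem toroidal_parabolic_projection_parabolic_general
    {W : Type*} [NormedAddCommGroup W] [InnerProductSpace ℝ W]
    (R : Set W) (hR : IsRootSystem R)
    (n : ℕ)
    (P : Set (W × (Fin n → ℝ))) (hP : IsParabolicIn (ToroidalDelta R n) P) :
    IsParabolicIn R {α | α ∈ R ∧ ∃ γ : Fin n → ℝ, IsIntVec γ ∧ (α, γ) ∈ P} :=
  ⟨toroidalProjection_union_neg (fun _ => hR.neg_mem) hP.1, toroidalProjection_add_mem hP.2⟩

/-- If `P` is a parabolic subset of the toroidal root system, then
`S = {α ∈ R : (α, γ) ∈ P for some γ ∈ ℤⁿ}` is a parabolic subset of `R`. -/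
theorem toroidal_parabolic_projection_parabolic
    {W : Type*} [NormedAddCommGroup W] [InnerProductSpace ℝ W]
    [FiniteDimensional ℝ W] (R : Set W) (hR : IsRootSystem R)
    (hirr : IsIrreducibleRootSystem R) (hspan : Submodule.span ℝ R = ⊤)
    (n : ℕ) (hn : 1 ≤ n)
    (P : Set (W × (Fin n → ℝ))) (hP : IsParabolicIn (ToroidalDelta R n) P) :
    IsParabolicIn R {α | α ∈ R ∧ ∃ γ : Fin n → ℝ, IsIntVec γ ∧ (α, γ) ∈ P} :=
  toroidal_parabolic_projection_parabolic_general R hR n P hP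
end

section
/- Let n ≥ 1 and let T ⊆ ℤⁿ ∖ {0} satisfy T ∪ (−T) = ℤⁿ ∖ {0} and be closed under addition within ℤⁿ ∖ {0} (i.e. γ, γ' ∈ T with γ + γ' ≠ 0 implies γ + γ' ∈ T). If T is a proper subset of ℤⁿ ∖ {0}, then there exists a nonzero linear functional λ on ℝⁿ such that λ(γ) ≥ 0 for every γ ∈ T. -/
open scoped NNReal

def intLattice (n : ℕ) : AddSubgroup (Fin n → ℝ) :=
  AddSubgroup.pi Set.univ fun _ => AddSubgroup.zmultiples 1

lemma isIntVec_iff_mem_intLattice {n : ℕ} {γ : Fin n → ℝ} :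
    IsIntVec γ ↔ γ ∈ intLattice n := by
  simp [IsIntVec, intLattice, AddSubgroup.mem_pi, AddSubgroup.mem_zmultiples_iff, eq_comm]

lemma finite_intLattice_inter_closedBall (n : ℕ) (R : ℝ) :
    ((intLattice n : Set (Fin n → ℝ)) ∩ Metric.closedBall 0 R).Finite := by
  refine (Set.Finite.pi fun _ =>
    (Set.finite_Icc (-⌈R⌉) ⌈R⌉).image ((↑) : ℤ → ℝ)).subset ?_
  rintro γ ⟨hγ, hR⟩ j -
  obtain ⟨k, hk⟩ := isIntVec_iff_mem_intLattice.2 hγ j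
  have hkR : |(k : ℝ)| ≤ R := hk ▸ (norm_le_pi_norm γ j).trans (mem_closedBall_zero_iff.1 hR)
  refine ⟨k, ⟨?_, ?_⟩, hk.symm⟩
  · exact_mod_cast (neg_le_neg (Int.le_ceil R)).trans (neg_le_of_abs_le hkR)
  · exact_mod_cast (le_of_abs_le hkR).trans (Int.le_ceil R)

theorem exists_nsmul_eq_sum_nsmul_of_sum_smul_eq {ι : Type*} [Fintype ι] {n : ℕ} {c : ι → ℝ}
    (hc : ∀ i, 0 ≤ c i) {z : ι → Fin n → ℝ} (hz : ∀ i, z i ∈ intLattice n) {δ : Fin n → ℝ}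
    (hδ : δ ∈ intLattice n) (h : ∑ i, c i • z i = δ) :
    ∃ m > 0, ∃ d : ι → ℕ, ∑ i, d i • z i = m • δ := by
  -- `e N = ∑ fract (N * c i) • z i` is a lattice point of norm at most `∑ ‖z i‖`, so it takes
  -- the same value at two times `N₁ < N₂`; their difference is the required relation.
  set e : ℕ → Fin n → ℝ := fun N => N • δ - ∑ i, ⌊N * c i⌋₊ • z i
  have he : ∀ N, e N = ∑ i, (N * c i - ⌊N * c i⌋₊) • z i := by
    intro N
    simp only [e, ← h, Finset.smul_sum, sub_smul, Finset.sum_sub_distrib, mul_smul,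
      Nat.cast_smul_eq_nsmul]
  have he_mem : ∀ N,
      e N ∈ (intLattice n : Set (Fin n → ℝ)) ∩ Metric.closedBall 0 (∑ i, ‖z i‖) := by
    refine fun N => ⟨sub_mem (nsmul_mem hδ N) (sum_mem fun i _ => nsmul_mem (hz i) _), ?_⟩
    rw [mem_closedBall_zero_iff, he]
    refine (norm_sum_le _ _).trans (Finset.sum_le_sum fun i _ => ?_)
    have h0 : 0 ≤ N * c i - ⌊N * c i⌋₊ :=
      sub_nonneg.2 (Nat.floor_le (mul_nonneg N.cast_nonneg (hc i)))
    have h1 : N * c i - ⌊N * c i⌋₊ ≤ 1 := by linarith [Nat.lt_floor_add_one (N * c i)]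
    rw [norm_smul, Real.norm_of_nonneg h0]
    exact mul_le_of_le_one_left (norm_nonneg _) h1
  obtain ⟨N₁, N₂, hlt, heq⟩ :=
    (finite_intLattice_inter_closedBall n _).exists_lt_map_eq_of_forall_mem he_mem
  have hmono : ∀ i, ⌊N₁ * c i⌋₊ ≤ ⌊N₂ * c i⌋₊ := fun i =>
    Nat.floor_le_floor (mul_le_mul_of_nonneg_right (by exact_mod_cast hlt.le) (hc i))
  refine ⟨N₂ - N₁, Nat.sub_pos_of_lt hlt, fun i => ⌊N₂ * c i⌋₊ - ⌊N₁ * c i⌋₊, ?_⟩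
  simp only [sub_nsmul _ (hmono _), sub_nsmul _ hlt.le, Finset.sum_add_distrib,
    Finset.sum_neg_distrib]
  simp only [e, sub_eq_sub_iff_add_eq_add] at heq
  rw [← sub_eq_add_neg, ← sub_eq_add_neg, sub_eq_sub_iff_add_eq_add, add_comm, heq]

theorem exists_nsmul_mem_closure_of_mem_span {n : ℕ} {S : Set (Fin n → ℝ)}
    (hS : S ⊆ intLattice n) {δ : Fin n → ℝ} (hδ : δ ∈ intLattice n)
    (h : δ ∈ Submodule.span ℝ≥0 S) : ∃ m > 0, m • δ ∈ AddSubmonoid.closure S := by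
  obtain ⟨k, c, z, rfl⟩ := Submodule.mem_span_set'.1 h
  obtain ⟨m, hm, d, hd⟩ := exists_nsmul_eq_sum_nsmul_of_sum_smul_eq (fun i => (c i).2)
    (fun i => hS (z i).2) hδ (by simp only [NNReal.smul_def]; rfl)
  exact ⟨m, hm, hd ▸ sum_mem fun i _ => nsmul_mem (AddSubmonoid.subset_closure (z i).2) _⟩

section ClosedUnderNonzeroSums

variable {G : Type*} {T : Set G}

theorem mem_of_mem_addSubmonoidClosure [AddMonoid G]
    (hT : ∀ x ∈ T, ∀ y ∈ T, x + y ≠ 0 → x + y ∈ T) {x : G}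
    (hx : x ∈ AddSubmonoid.closure T) (hx0 : x ≠ 0) : x ∈ T := by
  suffices ∀ x ∈ AddSubmonoid.closure T, x = 0 ∨ x ∈ T from (this x hx).resolve_left hx0
  intro x hx
  induction hx using AddSubmonoid.closure_induction with
  | mem x hx => exact .inr hx
  | zero => exact .inl rfl
  | add x y _ _ hx hy =>
    rcases hx with rfl | hx
    · rwa [zero_add]
    rcases hy with rfl | hy
    · rw [add_zero]; exact .inr hx
    by_cases hxy : x + y = 0
    · exact .inl hxy
    · exact .inr (hT x hx y hy hxy)

theorem mem_addSubmonoidClosure_of_nsmul_mem [AddGroup G] {x : G} (hneg : -x ∈ T) {m : ℕ}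
    (hm : 0 < m) (hx : m • x ∈ AddSubmonoid.closure T) : x ∈ AddSubmonoid.closure T := by
  obtain ⟨k, rfl⟩ := Nat.exists_eq_add_one_of_ne_zero hm.ne'
  have : x = (k + 1) • x + k • -x := by rw [neg_nsmul, succ_nsmul', add_neg_cancel_right]
  rw [this]
  exact add_mem hx (nsmul_mem (AddSubmonoid.subset_closure hneg) k)

end ClosedUnderNonzeroSums

theorem PointedCone.nonpos_of_forall_le {E : Type*} [AddCommGroup E] [Module ℝ E]
    (K : PointedCone ℝ E) (f : E →ₗ[ℝ] ℝ) {c : ℝ} (hf : ∀ x ∈ K, f x ≤ c) {x : E}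
    (hx : x ∈ K) : f x ≤ 0 := by
  by_contra! hpos
  have := hf (((|c| + 1) / f x) • x) (K.smul_mem (by positivity) hx)
  rw [map_smul, smul_eq_mul, div_mul_cancel₀ _ hpos.ne'] at this
  linarith [le_abs_self c]

theorem PointedCone.exists_dual_ne_zero_nonneg_of_ne_top {E : Type*} [NormedAddCommGroup E]
    [NormedSpace ℝ E] [FiniteDimensional ℝ E] {K : PointedCone ℝ E} (hK : K ≠ ⊤) :
    ∃ f : Module.Dual ℝ E, f ≠ 0 ∧ ∀ x ∈ K, 0 ≤ f x := by
  obtain ⟨δ, hδ⟩ : ∃ δ, δ ∉ K := by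
    by_contra! h; exact hK (eq_top_iff.2 fun x _ => h x)
  by_cases hint : (interior (K : Set E)).Nonempty
  · obtain ⟨f, hf0, hf⟩ := geometric_hahn_banach_of_nonempty_interior_point K.convex
      (fun h => hδ (interior_subset h)) hint
    refine ⟨-f.toLinearMap, fun h => hf0 ?_, fun x hx => ?_⟩
    · ext x; simpa using LinearMap.congr_fun h x
    · simpa using K.nonpos_of_forall_le f.toLinearMap hf hx
  · have hspan : (affineSpan ℝ (K : Set E)).direction ≠ ⊤ := by
      rw [Ne, AffineSubspace.direction_eq_top_iff_of_nonempty
        ⟨0, subset_affineSpan ℝ _ K.zero_mem⟩,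
        ← K.convex.interior_nonempty_iff_affineSpan_eq_top]
      exact hint
    obtain ⟨f, hf0, hfbot⟩ :=
      Submodule.exists_dual_map_eq_bot_of_lt_top hspan.lt_top inferInstance
    refine ⟨f, hf0, fun x hx => ?_⟩
    have hmem : x - 0 ∈ (affineSpan ℝ (K : Set E)).direction :=
      AffineSubspace.vsub_mem_direction (subset_affineSpan ℝ _ hx)
        (subset_affineSpan ℝ _ K.zero_mem)
    have : f (x - 0) ∈ Submodule.map f (affineSpan ℝ (K : Set E)).direction :=
      Submodule.mem_map_of_mem hmem
    rw [hfbot, Submodule.mem_bot, sub_zero] at this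
    exact this.ge

theorem proper_parabolic_lattice_separation_general
    (n : ℕ) (T : Set (Fin n → ℝ))
    (hsym : T ∪ (-T) = {γ : Fin n → ℝ | IsIntVec γ ∧ γ ≠ 0})
    (hclosed : ∀ γ ∈ T, ∀ γ' ∈ T, γ + γ' ≠ 0 → γ + γ' ∈ T)
    (hproper : T ≠ {γ : Fin n → ℝ | IsIntVec γ ∧ γ ≠ 0}) :
    ∃ l : (Fin n → ℝ) →ₗ[ℝ] ℝ, l ≠ 0 ∧ ∀ γ ∈ T, 0 ≤ l γ := by
  have hT : T ⊆ {γ | IsIntVec γ ∧ γ ≠ 0} := hsym ▸ Set.subset_union_left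
  obtain ⟨δ, ⟨hδ, hδ0⟩, hδT⟩ : ∃ δ ∈ {γ : Fin n → ℝ | IsIntVec γ ∧ γ ≠ 0}, δ ∉ T :=
    Set.exists_of_ssubset (hT.ssubset_of_ne hproper)
  have hnegδ : -δ ∈ T := by
    have : δ ∈ T ∪ -T := hsym ▸ ⟨hδ, hδ0⟩
    exact this.resolve_left hδT
  have hcone : Submodule.span ℝ≥0 T ≠ ⊤ := fun htop => by
    obtain ⟨m, hm, hmδ⟩ := exists_nsmul_mem_closure_of_mem_span
      (fun γ hγ => isIntVec_iff_mem_intLattice.1 (hT hγ).1) (isIntVec_iff_mem_intLattice.1 hδ)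
      (htop ▸ Submodule.mem_top)
    exact hδT (mem_of_mem_addSubmonoidClosure hclosed
      (mem_addSubmonoidClosure_of_nsmul_mem hnegδ hm hmδ) hδ0)
  obtain ⟨l, hl0, hl⟩ := PointedCone.exists_dual_ne_zero_nonneg_of_ne_top hcone
  exact ⟨l, hl0, fun γ hγ => hl γ (Submodule.subset_span hγ)⟩

/-- If `T` is a proper parabolic subset of `ℤⁿ ∖ {0}` (i.e. `T ∪ (−T) = ℤⁿ ∖ {0}`
and `T` is closed under addition within `ℤⁿ ∖ {0}`), then there is a nonzero
linear functional `λ` on `ℝⁿ` that is nonnegative on `T`. -/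
theorem proper_parabolic_lattice_separation
    (n : ℕ) (hn : 1 ≤ n) (T : Set (Fin n → ℝ))
    (hsym : T ∪ (-T) = {γ : Fin n → ℝ | IsIntVec γ ∧ γ ≠ 0})
    (hclosed : ∀ γ ∈ T, ∀ γ' ∈ T, γ + γ' ≠ 0 → γ + γ' ∈ T)
    (hproper : T ≠ {γ : Fin n → ℝ | IsIntVec γ ∧ γ ≠ 0}) :
    ∃ l : (Fin n → ℝ) →ₗ[ℝ] ℝ, l ≠ 0 ∧ ∀ γ ∈ T, 0 ≤ l γ :=
  proper_parabolic_lattice_separation_general n T hsym hclosed hproper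
end
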